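/- Let G be a bridgeless cubic graph having a 2-factor each of whose cycles is a chordless 5-cycle, and let M be the perfect matching complementary to this 2-factor. Suppose there is a partition of the cycles of this 2-factor into two classes such that every edge of M joins vertices lying on cycles in different classes (equivalently, the multigraph G* obtained by contracting each 5-cycle of the 2-factor to a single vertex is bipartite). Then G admits a Fulkerson covering. -/

import Mathlib

open SimpleGraph

variable {V : Type*}

/-- Two edges (as unordered pairs) are disjoint: they share no vertex. -/
def Sym2Disjoint {V : Type*} (e f : Sym2 V) : Prop := ∀ v : V, v ∈ e → v ∉ f

/-- A matching of `G`, given as a set of edges of `G` which are pairwise disjoint. -/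
def IsMatchingSet (G : SimpleGraph V) (M : Set (Sym2 V)) : Prop :=
  M ⊆ G.edgeSet ∧ M.Pairwise Sym2Disjoint

/-- A perfect matching of `G`: a matching covering every vertex. -/
def IsPerfectMatchingSet (G : SimpleGraph V) (M : Set (Sym2 V)) : Prop :=
  IsMatchingSet G M ∧ ∀ v : V, ∃ e ∈ M, v ∈ e

/-- A cubic (3-regular) graph. -/
def IsCubic (G : SimpleGraph V) : Prop := ∀ v : V, (G.neighborSet v).ncard = 3

/-- A bridgeless graph. -/
def Bridgeless (G : SimpleGraph V) : Prop := ∀ e : Sym2 V, ¬ G.IsBridge e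

/-- A Fulkerson covering: six perfect matchings such that every edge of `G`
lies in exactly two of them (counted with multiplicity in the list). -/
def IsFulkersonCovering (G : SimpleGraph V) (M : Fin 6 → Set (Sym2 V)) : Prop :=
  (∀ i, IsPerfectMatchingSet G (M i)) ∧
  ∀ e ∈ G.edgeSet, ({i : Fin 6 | e ∈ M i} : Set (Fin 6)).ncard = 2

/-- An FR-triple: three perfect matchings with empty intersection. -/
def IsFRTriple (G : SimpleGraph V) (M1 M2 M3 : Set (Sym2 V)) : Prop :=
  IsPerfectMatchingSet G M1 ∧ IsPerfectMatchingSet G M2 ∧ IsPerfectMatchingSet G M3 ∧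
  M1 ∩ M2 ∩ M3 = ∅

/-- `tSet G M1 M2 M3 k` is the set `T_k` of edges of `G` lying in exactly `k`
of the three matchings (counted with multiplicity). -/
def tSet (G : SimpleGraph V) (M1 M2 M3 : Set (Sym2 V)) (k : ℕ) : Set (Sym2 V) :=
  {e ∈ G.edgeSet | ({i : Fin 3 | e ∈ ![M1, M2, M3] i} : Set (Fin 3)).ncard = k}

/-- Two FR-triples are compatible when `T_0 = T'_2` and `T_2 = T'_0`. -/
def CompatibleFR (G : SimpleGraph V) (M1 M2 M3 N1 N2 N3 : Set (Sym2 V)) : Prop :=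
  tSet G M1 M2 M3 0 = tSet G N1 N2 N3 2 ∧ tSet G M1 M2 M3 2 = tSet G N1 N2 N3 0

/-- `P` describes a 2-factor of `G` whose cycles are chordless 5-cycles:
a partition of the vertex set into 5-element parts each inducing a connected
2-regular (hence chordless cycle) subgraph of `G`. -/
def IsChordlessC5TwoFactor (G : SimpleGraph V) (P : Set (Set V)) : Prop :=
  P.PairwiseDisjoint id ∧ ⋃₀ P = Set.univ ∧
  ∀ S ∈ P, S.ncard = 5 ∧ (∀ v ∈ S, ({u | u ∈ S ∧ G.Adj v u}).ncard = 2) ∧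
    (G.induce S).Connected

/-- The perfect matching complementary to the 2-factor described by `P`:
the edges of `G` not lying inside a part of `P`. -/
def complementaryMatching (G : SimpleGraph V) (P : Set (Set V)) : Set (Sym2 V) :=
  {e | e ∈ G.edgeSet ∧ ¬ ∃ S ∈ P, ∀ v ∈ e, v ∈ S}

/-!
Contract every pentagon of the 2-factor to a point. The result `G*` is a 5-regular bipartite
multigraph whose edges are those of the complementary matching `M`, so by König's theorem `M`
has a 5-edge-coloring in which the five `M`-edges leaving each pentagon get five different
colors. For a color `i`, let `Nᵢ` consist of the `M`-edges of color `i` and, on every pentagon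
`v₀ … v₄` whose vertex of color `i` is `v₀`, the two edges `v₁v₂` and `v₃v₄`; it is a perfect
matching. Then `M, N₀, …, N₄` is a Fulkerson covering: an `M`-edge lies in `M` and in `Nᵢ` for
its color `i`, and a pentagon edge `vⱼvⱼ₊₁` lies in `Nᵢ` exactly when color `i` sits at
`vⱼ₋₁` or at `vⱼ₊₂`.
-/

section EdgeColoring

open Finset

variable {E α β γ : Type*}

lemma card_filter_mem_eq_mul [DecidableEq α] {s : Finset E} {L : E → α} {r : ℕ}
    (hL : ∀ a, #{e ∈ s | L e = a} = r) (X : Finset α) : #{e ∈ s | L e ∈ X} = r * #X := by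
  rw [card_eq_sum_card_fiberwise (s := {e ∈ s | L e ∈ X}) (f := L) (t := X)
    fun e he => (mem_filter.1 he).2, sum_congr rfl fun a ha => ?_, sum_const, smul_eq_mul,
    mul_comm]
  rw [filter_filter, ← hL a]
  exact congrArg card <| filter_congr fun e _ => ⟨fun h => h.2, fun h => ⟨h ▸ ha, h⟩⟩

lemma card_filter_sdiff_eq [DecidableEq E] [DecidableEq γ] {s t : Finset E} (hts : t ⊆ s)
    (f : E → γ) {x : γ} {r : ℕ} (hs : #{e ∈ s | f e = x} = r + 1) (ht : #{e ∈ t | f e = x} = 1) :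
    #{e ∈ s \ t | f e = x} = r := by
  have h : {e ∈ s \ t | f e = x} = {e ∈ s | f e = x} \ {e ∈ t | f e = x} := by
    ext e
    simp only [mem_filter, mem_sdiff]
    tauto
  rw [h, card_sdiff_of_subset (filter_subset_filter _ hts), hs, ht, Nat.add_sub_cancel]

/-- A bipartite multigraph is given by its edge set `s` and the two endpoint maps: `e ∈ s` joins
`L e` to `R e`. -/
lemma exists_perfectMatching_of_regular [DecidableEq E] [Fintype α] [DecidableEq α] [Fintype β]
    [DecidableEq β] {s : Finset E} {L : E → α} {R : E → β} {r : ℕ} (hr : 0 < r)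
    (hL : ∀ a, #{e ∈ s | L e = a} = r) (hR : ∀ b, #{e ∈ s | R e = b} = r) :
    ∃ t ⊆ s, (∀ a, #{e ∈ t | L e = a} = 1) ∧ ∀ b, #{e ∈ t | R e = b} = 1 := by
  have hall : ∀ X : Finset α, #X ≤ #(X.biUnion fun a => image R {e ∈ s | L e = a}) := by
    intro X
    refine le_of_mul_le_mul_left ?_ hr
    rw [← card_filter_mem_eq_mul hL, ← card_filter_mem_eq_mul hR]
    refine card_le_card fun e he => ?_
    simp only [mem_filter, mem_biUnion, mem_image] at he ⊢
    exact ⟨he.1, L e, he.2, e, ⟨he.1, rfl⟩, rfl⟩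
  obtain ⟨f, hf_inj, hf⟩ := (all_card_le_biUnion_card_iff_exists_injective _).1 hall
  have hcard : Fintype.card α = Fintype.card β := by
    have hα := card_filter_mem_eq_mul hL univ
    have hβ := card_filter_mem_eq_mul hR univ
    simp only [mem_univ, filter_true, card_univ] at hα hβ
    exact Nat.eq_of_mul_eq_mul_left hr (hα.symm.trans hβ)
  have hf_bij : Function.Bijective f :=
    (Fintype.bijective_iff_injective_and_card f).2 ⟨hf_inj, hcard⟩
  have hsel : ∀ a, ∃ e ∈ s, L e = a ∧ R e = f a := by
    intro a
    obtain ⟨e, he, hRe⟩ := mem_image.1 (hf a)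
    exact ⟨e, (mem_filter.1 he).1, (mem_filter.1 he).2, hRe⟩
  choose sel hsel_mem hsel_L hsel_R using hsel
  refine ⟨univ.image sel, fun e he => ?_, fun a => ?_, fun b => ?_⟩
  · obtain ⟨a, -, rfl⟩ := mem_image.1 he
    exact hsel_mem a
  · refine card_eq_one.2 ⟨sel a, ext fun e => ?_⟩
    simp only [mem_filter, mem_image, mem_univ, true_and, mem_singleton]
    constructor
    · rintro ⟨⟨a', rfl⟩, rfl⟩
      rw [hsel_L]
    · rintro rfl
      exact ⟨⟨a, rfl⟩, hsel_L a⟩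
  · obtain ⟨a, rfl⟩ := hf_bij.2 b
    refine card_eq_one.2 ⟨sel a, ext fun e => ?_⟩
    simp only [mem_filter, mem_image, mem_univ, true_and, mem_singleton]
    constructor
    · rintro ⟨⟨a', rfl⟩, h⟩
      rw [hf_inj ((hsel_R a').symm.trans h)]
    · rintro rfl
      exact ⟨⟨a, rfl⟩, hsel_R a⟩

lemma injOn_fibers_ite [DecidableEq E] [DecidableEq γ] {s t : Finset E} {f : E → γ} {c : E → ℕ}
    {r : ℕ}
    (ht : ∀ x, #{e ∈ t | f e = x} ≤ 1) (hc : ∀ e ∈ s \ t, c e < r)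
    (hinj : ∀ e ∈ s \ t, ∀ e' ∈ s \ t, f e = f e' → c e = c e' → e = e') :
    ∀ e ∈ s, ∀ e' ∈ s, f e = f e' → (if e ∈ t then r else c e) = (if e' ∈ t then r else c e') →
      e = e' := by
  intro e he e' he' hf hce
  by_cases h : e ∈ t <;> by_cases h' : e' ∈ t <;> simp only [h, h', if_true, if_false] at hce
  · exact card_le_one.1 (ht (f e')) e (mem_filter.2 ⟨h, hf⟩) e' (mem_filter.2 ⟨h', rfl⟩)
  · exact absurd hce (hc e' (mem_sdiff.2 ⟨he', h'⟩)).ne'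
  · exact absurd hce (hc e (mem_sdiff.2 ⟨he, h⟩)).ne
  · exact hinj e (mem_sdiff.2 ⟨he, h⟩) e' (mem_sdiff.2 ⟨he', h'⟩) hf hce

theorem exists_edgeColoring_of_regular [DecidableEq E] [Fintype α] [DecidableEq α] [Fintype β]
    [DecidableEq β] (L : E → α) (R : E → β) (r : ℕ) (s : Finset E)
    (hL : ∀ a, #{e ∈ s | L e = a} = r) (hR : ∀ b, #{e ∈ s | R e = b} = r) :
    ∃ c : E → ℕ, (∀ e ∈ s, c e < r) ∧
      (∀ e ∈ s, ∀ e' ∈ s, L e = L e' → c e = c e' → e = e') ∧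
      (∀ e ∈ s, ∀ e' ∈ s, R e = R e' → c e = c e' → e = e') := by
  induction r generalizing s with
  | zero =>
    have hs : s = ∅ := eq_empty_of_forall_notMem fun e he =>
      card_ne_zero_of_mem (s := {e' ∈ s | L e' = L e}) (mem_filter.2 ⟨he, rfl⟩) (hL (L e))
    simp [hs]
  | succ r ih =>
    obtain ⟨t, hts, htL, htR⟩ := exists_perfectMatching_of_regular r.succ_pos hL hR
    obtain ⟨c, hc, hcL, hcR⟩ := ih (s \ t) (fun a => card_filter_sdiff_eq hts L (hL a) (htL a))
      (fun b => card_filter_sdiff_eq hts R (hR b) (htR b))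
    refine ⟨fun e => if e ∈ t then r else c e, fun e he => ?_,
      injOn_fibers_ite (fun a => (htL a).le) hc hcL,
      injOn_fibers_ite (fun b => (htR b).le) hc hcR⟩
    by_cases h : e ∈ t
    · simp [h]
    · simp only [h, if_false]
      exact (hc e (mem_sdiff.2 ⟨he, h⟩)).trans (Nat.lt_succ_self r)

end EdgeColoring

section Pentagon

variable {G : SimpleGraph V} {S : Set V}

lemma eq_or_eq_of_adj_of_ncard_eq_two {v a b u : V} (hv : {x | x ∈ S ∧ G.Adj v x}.ncard = 2)
    (ha : a ∈ S) (hb : b ∈ S) (hva : G.Adj v a) (hvb : G.Adj v b) (hab : a ≠ b) (hu : u ∈ S)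
    (hvu : G.Adj v u) : u = a ∨ u = b := by
  have hsub : ({a, b} : Set V) ⊆ {x | x ∈ S ∧ G.Adj v x} := by
    rintro x (rfl | rfl)
    exacts [⟨ha, hva⟩, ⟨hb, hvb⟩]
  have heq := Set.eq_of_subset_of_ncard_le hsub (by rw [hv, Set.ncard_pair hab])
    (Set.finite_of_ncard_ne_zero (by omega))
  exact (heq ▸ ⟨hu, hvu⟩ : u ∈ ({a, b} : Set V))

lemma ncard_le_two_of_closed (h5 : S.ncard = 5)
    (hdeg : ∀ v ∈ S, {u | u ∈ S ∧ G.Adj v u}.ncard = 2) {C : Set V} (hCS : C ⊆ S)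
    (hC : ∀ c ∈ C, ∀ u ∈ S, G.Adj c u → u ∈ C) (hlt : C.ncard < 5) : C.ncard ≤ 2 := by
  have hS : S.Finite := Set.finite_of_ncard_ne_zero (by omega)
  obtain ⟨w, hw, hwC⟩ := Set.exists_mem_notMem_of_ncard_lt_ncard (h5 ▸ hlt) (hS.subset hCS)
  have hsub : {u | u ∈ S ∧ G.Adj w u} ⊆ S \ insert w C := by
    rintro u ⟨huS, hwu⟩
    refine ⟨huS, ?_⟩
    rintro (rfl | huC)
    · exact hwu.ne rfl
    · exact hwC (hC u huC w hw hwu.symm)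
  have hcard := Set.ncard_le_ncard hsub hS.sdiff
  rw [hdeg w hw, Set.ncard_sdiff' (Set.insert_subset hw hCS) hS,
    Set.ncard_insert_of_notMem hwC (hS.subset hCS)] at hcard
  omega

lemma not_adj_of_ncard_eq_five (h5 : S.ncard = 5)
    (hdeg : ∀ v ∈ S, {u | u ∈ S ∧ G.Adj v u}.ncard = 2) {v0 v1 v4 : V} (hv0 : v0 ∈ S)
    (hv1 : v1 ∈ S) (hv4 : v4 ∈ S) (h01 : G.Adj v0 v1) (h04 : G.Adj v0 v4) (h14 : v1 ≠ v4) :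
    ¬ G.Adj v1 v4 := by
  intro h14'
  have hC3 : ({v0, v1, v4} : Set V).ncard = 3 :=
    Set.ncard_eq_three.2 ⟨v0, v1, v4, h01.ne, h04.ne, h14, rfl⟩
  refine absurd (ncard_le_two_of_closed h5 hdeg (C := {v0, v1, v4})
    (by simp [Set.insert_subset_iff, *]) ?_ (by omega)) (by omega)
  simp only [Set.mem_insert_iff, Set.mem_singleton_iff, forall_eq_or_imp, forall_eq]
  have nbr {v a b} (hv : v ∈ S) (ha : a ∈ S) (hb : b ∈ S) (hva : G.Adj v a) (hvb : G.Adj v b)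
      (hab : a ≠ b) {u} (hu : u ∈ S) (hvu : G.Adj v u) : u = a ∨ u = b :=
    eq_or_eq_of_adj_of_ncard_eq_two (hdeg v hv) ha hb hva hvb hab hu hvu
  refine ⟨fun u hu h => ?_, fun u hu h => ?_, fun u hu h => ?_⟩
  · rcases nbr hv0 hv1 hv4 h01 h04 h14 hu h with rfl | rfl <;> simp
  · rcases nbr hv1 hv0 hv4 h01.symm h14' h04.ne hu h with rfl | rfl <;> simp
  · rcases nbr hv4 hv0 hv1 h04.symm h14'.symm h01.ne hu h with rfl | rfl <;> simp

lemma eq_of_adj_of_ncard_eq_five (h5 : S.ncard = 5)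
    (hdeg : ∀ v ∈ S, {u | u ∈ S ∧ G.Adj v u}.ncard = 2)
    {v0 v1 v2 v4 : V} (hv0 : v0 ∈ S) (hv1 : v1 ∈ S) (hv2 : v2 ∈ S) (hv4 : v4 ∈ S)
    (h01 : G.Adj v0 v1) (h04 : G.Adj v0 v4) (h14 : v1 ≠ v4) (h12 : G.Adj v1 v2)
    (h42 : G.Adj v4 v2) : v2 = v0 := by
  by_contra h20
  have hC4 : ({v0, v1, v2, v4} : Set V).ncard = 4 := by
    rw [Set.ncard_insert_of_notMem (by simp [h01.ne, Ne.symm h20, h04.ne]),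
      Set.ncard_eq_three.2 ⟨v1, v2, v4, h12.ne, h14, h42.ne.symm, rfl⟩]
  refine absurd (ncard_le_two_of_closed h5 hdeg (C := {v0, v1, v2, v4})
    (by simp [Set.insert_subset_iff, *]) ?_ (by omega)) (by omega)
  simp only [Set.mem_insert_iff, Set.mem_singleton_iff, forall_eq_or_imp, forall_eq]
  have nbr {v a b} (hv : v ∈ S) (ha : a ∈ S) (hb : b ∈ S) (hva : G.Adj v a) (hvb : G.Adj v b)
      (hab : a ≠ b) {u} (hu : u ∈ S) (hvu : G.Adj v u) : u = a ∨ u = b :=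
    eq_or_eq_of_adj_of_ncard_eq_two (hdeg v hv) ha hb hva hvb hab hu hvu
  refine ⟨fun u hu h => ?_, fun u hu h => ?_, fun u hu h => ?_, fun u hu h => ?_⟩
  · rcases nbr hv0 hv1 hv4 h01 h04 h14 hu h with rfl | rfl <;> simp
  · rcases nbr hv1 hv0 hv2 h01.symm h12 (Ne.symm h20) hu h with rfl | rfl <;> simp
  · rcases nbr hv2 hv1 hv4 h12.symm h42.symm h14 hu h with rfl | rfl <;> simp
  · rcases nbr hv4 hv0 hv2 h04.symm h42 (Ne.symm h20) hu h with rfl | rfl <;> simp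

theorem exists_pentagon_of_ncard_eq_five (h5 : S.ncard = 5)
    (hdeg : ∀ v ∈ S, {u | u ∈ S ∧ G.Adj v u}.ncard = 2) :
    ∃ f : ZMod 5 → V, Function.Injective f ∧ Set.range f = S ∧ ∀ j, G.Adj (f j) (f (j + 1)) := by
  obtain ⟨v0, hv0⟩ := Set.nonempty_of_ncard_ne_zero (s := S) (by omega)
  obtain ⟨v1, v4, h14, hN0⟩ := Set.ncard_eq_two.1 (hdeg v0 hv0)
  have hN0' : ∀ u, u = v1 ∨ u = v4 → u ∈ S ∧ G.Adj v0 u := fun u hu => by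
    rw [← Set.mem_ofPred_eq (p := fun u => u ∈ S ∧ G.Adj v0 u), hN0]; exact hu
  obtain ⟨hv1, h01⟩ := hN0' v1 (Or.inl rfl)
  obtain ⟨hv4, h04⟩ := hN0' v4 (Or.inr rfl)
  obtain ⟨v2, ⟨hv2, h12⟩, h20⟩ := Set.exists_ne_of_one_lt_ncard (by rw [hdeg v1 hv1]; omega) v0
  obtain ⟨v3, ⟨hv3, h43⟩, h30⟩ := Set.exists_ne_of_one_lt_ncard (by rw [hdeg v4 hv4]; omega) v0
  have h14' := not_adj_of_ncard_eq_five h5 hdeg hv0 hv1 hv4 h01 h04 h14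
  have h24 : v2 ≠ v4 := by rintro rfl; exact h14' h12
  have h13 : v1 ≠ v3 := by rintro rfl; exact h14' h43.symm
  have h23 : v2 ≠ v3 := by
    rintro rfl
    exact h20 (eq_of_adj_of_ncard_eq_five h5 hdeg hv0 hv1 hv2 hv4 h01 h04 h14 h12 h43)
  have hf : Function.Injective (![v0, v1, v2, v3, v4] : ZMod 5 → V) := by
    simp only [Matrix.vecCons, Fin.cons_injective_iff, Fin.range_cons]
    simp [Function.injective_of_subsingleton, h01.ne, h20.symm, h30.symm, h04.ne, h12.ne, h13,
      h14, h23, h24, h43.ne.symm]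
  have hfS : Set.range (![v0, v1, v2, v3, v4] : ZMod 5 → V) = S := by
    refine Set.eq_of_subset_of_ncard_le ?_ (by rw [h5, Set.ncard_range_of_injective hf]; simp)
      (Set.finite_of_ncard_ne_zero (by omega))
    rintro _ ⟨j, rfl⟩
    fin_cases j
    exacts [hv0, hv1, hv2, hv3, hv4]
  have h23' : G.Adj v2 v3 := by
    obtain ⟨x, ⟨hx, h2x⟩, hx1⟩ := Set.exists_ne_of_one_lt_ncard (by rw [hdeg v2 hv2]; omega) v1
    obtain ⟨j, rfl⟩ := hfS.symm ▸ hx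
    fin_cases j
    · rcases eq_or_eq_of_adj_of_ncard_eq_two (hdeg v0 hv0) hv1 hv4 h01 h04 h14 hv2 h2x.symm
        with h | h
      exacts [(h12.ne h.symm).elim, (h24 h).elim]
    · exact absurd rfl hx1
    · exact (h2x.ne rfl).elim
    · exact h2x
    · rcases eq_or_eq_of_adj_of_ncard_eq_two (hdeg v4 hv4) hv0 hv3 h04.symm h43 h30.symm hv2
        h2x.symm with h | h
      exacts [(h20 h).elim, (h23 h).elim]
  refine ⟨_, hf, hfS, fun j => ?_⟩
  fin_cases j
  exacts [h01, h12, h23', h43.symm, h04.symm]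

end Pentagon

section Involutions

variable {G : SimpleGraph V} {π : V → V}

lemma Function.Involutive.mk_mem_range_iff (hπ : Function.Involutive π) {u w : V} :
    s(u, w) ∈ Set.range (fun v => s(v, π v)) ↔ π u = w := by
  refine ⟨?_, fun h => ⟨u, h ▸ rfl⟩⟩
  rintro ⟨v, hv⟩
  rcases Sym2.eq_iff.1 hv with ⟨rfl, rfl⟩ | ⟨rfl, rfl⟩
  exacts [rfl, hπ v]

lemma Function.Involutive.isPerfectMatchingSet_range (hπ : Function.Involutive π)
    (hadj : ∀ v, G.Adj v (π v)) : IsPerfectMatchingSet G (Set.range fun v => s(v, π v)) := by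
  refine ⟨⟨?_, ?_⟩, fun v => ⟨_, ⟨v, rfl⟩, Sym2.mem_mk_left _ _⟩⟩
  · rintro _ ⟨v, rfl⟩
    exact hadj v
  · have key : ∀ {v x}, x ∈ s(v, π v) → s(v, π v) = s(x, π x) := by
      intro v x hx
      rcases Sym2.mem_iff.1 hx with rfl | rfl
      · rfl
      · rw [hπ v, Sym2.eq_swap]
    rintro _ ⟨v, rfl⟩ _ ⟨w, rfl⟩ hne x hxv hxw
    exact hne ((key hxv).trans (key hxw).symm)

lemma ncard_setOf_fin_succ {n : ℕ} (p : Fin (n + 1) → Prop) [DecidablePred p] :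
    {j | p j}.ncard = (if p 0 then 1 else 0) + {i : Fin n | p i.succ}.ncard := by
  simp only [Set.ncard_eq_toFinset_card', Set.toFinset_ofPred, Fin.card_filter_univ_succ']

theorem isFulkersonCovering_of_involutive {π : Fin 6 → V → V}
    (hπ : ∀ j, Function.Involutive (π j)) (hadj : ∀ j v, G.Adj v (π j v))
    (hcount : ∀ u w, G.Adj u w → {j | π j u = w}.ncard = 2) :
    IsFulkersonCovering G fun j => Set.range fun v => s(v, π j v) := by
  refine ⟨fun j => (hπ j).isPerfectMatchingSet_range (hadj j), fun e he => ?_⟩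
  induction e using Sym2.ind with
  | _ u w => simpa only [(hπ _).mk_mem_range_iff] using hcount u w he

end Involutions

/-- The partner of `a` in the perfect matching `{k+1, k+2}, {k+3, k+4}` of the pentagon `ZMod 5`
with `k` removed. -/
def pentagonPartner (k a : ZMod 5) : ZMod 5 := if a - 1 = k ∨ a + 2 = k then a + 1 else a - 1

lemma pentagonPartner_ne {k a : ZMod 5} (h : a ≠ k) : pentagonPartner k a ≠ k := by
  revert k a; decide

lemma pentagonPartner_pentagonPartner {k a : ZMod 5} (h : a ≠ k) :
    pentagonPartner k (pentagonPartner k a) = a := by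
  revert k a; decide

lemma pentagonPartner_eq_add_one_iff {k a : ZMod 5} :
    pentagonPartner k a = a + 1 ↔ a - 1 = k ∨ a + 2 = k := by
  revert k a; decide

/-- `vertex (S, j)` is the `j`-th vertex of the pentagon `S` of a 2-factor of `G`, and `mate` is
the complementary perfect matching. -/
structure PentagonFactor (G : SimpleGraph V) (ι : Type*) where
  vertex : ι × ZMod 5 ≃ V
  mate : V → V
  mate_involutive : Function.Involutive mate
  adj_mate (v : V) : G.Adj v (mate v)
  adj_succ (S : ι) (j : ZMod 5) : G.Adj (vertex (S, j)) (vertex (S, j + 1))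
  mate_ne (S : ι) (j k : ZMod 5) : mate (vertex (S, j)) ≠ vertex (S, k)
  eq_of_adj (S : ι) (j : ZMod 5) (w : V) : G.Adj (vertex (S, j)) w →
    w = mate (vertex (S, j)) ∨ w = vertex (S, j + 1) ∨ w = vertex (S, j - 1)

namespace PentagonFactor

variable {G : SimpleGraph V} {ι : Type*} (D : PentagonFactor G ι) {col : V → Fin 5}

def IsColoring (col : V → Fin 5) : Prop :=
  (∀ v, col (D.mate v) = col v) ∧ ∀ S, Function.Injective fun j => col (D.vertex (S, j))

def part (v : V) : ι := (D.vertex.symm v).1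

@[simp]
lemma part_vertex (S : ι) (j : ZMod 5) : D.part (D.vertex (S, j)) = S := by
  simp [part]

open Finset in
lemma card_filter_part_eq [Fintype V] [DecidableEq ι] (S : ι) : #{v | D.part v = S} = 5 := by
  classical
  have h : ({v | D.part v = S} : Finset V) = univ.image fun j => D.vertex (S, j) := by
    ext v
    obtain ⟨⟨T, j⟩, rfl⟩ := D.vertex.surjective v
    simp [eq_comm]
  rw [h, card_image_of_injective _ fun j k hjk => by simpa using hjk]
  simp

open Finset in
lemma card_filter_part_mate_eq [Fintype V] [DecidableEq ι] (S : ι) :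
    #{v | D.part (D.mate v) = S} = 5 := by
  rw [← D.card_filter_part_eq S]
  refine card_nbij' D.mate D.mate (fun v hv => ?_) (fun v hv => ?_)
    (fun v _ => D.mate_involutive v) (fun v _ => D.mate_involutive v)
  · simpa using hv
  · simpa [D.mate_involutive v] using hv

/-- Every vertex `v` is an edge from `part v` to `part (mate v)`, so each mate-edge appears twice,
once in each direction; `side` chooses one direction, consistently along each pentagon. -/
theorem exists_isColoring [Finite V] (side : ι → Prop)
    (hside : ∀ v, side (D.part (D.mate v)) ↔ ¬ side (D.part v)) : ∃ col, D.IsColoring col := by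
  classical
  have : Finite (ι × ZMod 5) := Finite.of_equiv V D.vertex.symm
  have : Finite ι := Finite.prod_left (ZMod 5)
  have : Fintype ι := Fintype.ofFinite ι
  have : Fintype V := Fintype.ofFinite V
  obtain ⟨c, hc5, hcL, hcR⟩ := exists_edgeColoring_of_regular D.part (D.part ∘ D.mate) 5
    Finset.univ D.card_filter_part_eq D.card_filter_part_mate_eq
  refine ⟨fun v => ⟨if side (D.part v) then c v else c (D.mate v), by
    split_ifs <;> exact hc5 _ (Finset.mem_univ _)⟩, fun v => Fin.ext ?_, fun S j k hjk => ?_⟩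
  · by_cases h : side (D.part v)
    · simp [h, mt (hside v).1 (not_not.2 h), D.mate_involutive v]
    · simp [h, (hside v).2 h]
  · have hjk' := congrArg Fin.val hjk
    dsimp only at hjk'
    simp only [part_vertex] at hjk'
    by_cases hS : side S
    · simp only [hS, if_true] at hjk'
      simpa using hcL _ (Finset.mem_univ _) _ (Finset.mem_univ _) (by simp) hjk'
    · simp only [hS, if_false] at hjk'
      have hmate := hcR _ (Finset.mem_univ _) _ (Finset.mem_univ _)
        (by simp [D.mate_involutive _]) hjk'
      simpa using D.mate_involutive.injective hmate

/-- The partner map of the matching `Nᵢ` of color `i`; `(S, a - 1)` or `(S, a + 2)` having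
color `i` means that `(S, a)` is the first vertex of an edge of `Nᵢ` on the pentagon. -/
def partner (col : V → Fin 5) (i : Fin 5) (v : V) : V :=
  if col v = i then D.mate v
  else
    let S := (D.vertex.symm v).1
    let a := (D.vertex.symm v).2
    if col (D.vertex (S, a - 1)) = i ∨ col (D.vertex (S, a + 2)) = i then D.vertex (S, a + 1)
    else D.vertex (S, a - 1)

lemma IsColoring.exists_col_eq {D : PentagonFactor G ι} (hcol : D.IsColoring col) (S : ι)
    (i : Fin 5) : ∃ k, col (D.vertex (S, k)) = i :=
  ((Fintype.bijective_iff_injective_and_card _).2 ⟨hcol.2 S, by simp⟩).2 i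

lemma partner_vertex (hcol : D.IsColoring col) {S : ι} {k : ZMod 5} {i : Fin 5}
    (hk : col (D.vertex (S, k)) = i) (a : ZMod 5) :
    D.partner col i (D.vertex (S, a)) =
      if a = k then D.mate (D.vertex (S, a)) else D.vertex (S, pentagonPartner k a) := by
  have key : ∀ t, col (D.vertex (S, t)) = i ↔ t = k := fun t => hk ▸ (hcol.2 S).eq_iff
  simp only [partner, Equiv.symm_apply_apply, key, pentagonPartner]
  split_ifs <;> rfl

lemma partner_eq_mate_iff {i : Fin 5} {v : V} : D.partner col i v = D.mate v ↔ col v = i := by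
  refine ⟨fun h => ?_, fun h => if_pos h⟩
  by_contra hne
  obtain ⟨⟨S, a⟩, rfl⟩ := D.vertex.surjective v
  simp only [partner, hne, if_false, Equiv.symm_apply_apply] at h
  split_ifs at h
  exacts [D.mate_ne S a _ h.symm, D.mate_ne S a _ h.symm]

lemma adj_partner (i : Fin 5) (v : V) : G.Adj v (D.partner col i v) := by
  obtain ⟨⟨S, a⟩, rfl⟩ := D.vertex.surjective v
  simp only [partner, Equiv.symm_apply_apply]
  split_ifs
  · exact D.adj_mate _
  · simpa using D.adj_succ S a
  · simpa using (D.adj_succ S (a - 1)).symm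

lemma partner_involutive (hcol : D.IsColoring col) (i : Fin 5) :
    Function.Involutive (D.partner col i) := by
  intro v
  obtain ⟨⟨S, a⟩, rfl⟩ := D.vertex.surjective v
  obtain ⟨k, hk⟩ := hcol.exists_col_eq S i
  rw [D.partner_vertex hcol hk]
  split_ifs with h
  · rw [D.partner_eq_mate_iff.2 (by rw [hcol.1, h, hk]), D.mate_involutive]
  · rw [D.partner_vertex hcol hk, if_neg (pentagonPartner_ne h),
      pentagonPartner_pentagonPartner h]

lemma ncard_partner_eq_succ (hcol : D.IsColoring col) (S : ι) (a : ZMod 5) :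
    {i | D.partner col i (D.vertex (S, a)) = D.vertex (S, a + 1)}.ncard = 2 := by
  have hiff : ∀ i, D.partner col i (D.vertex (S, a)) = D.vertex (S, a + 1) ↔
      i = col (D.vertex (S, a - 1)) ∨ i = col (D.vertex (S, a + 2)) := by
    intro i
    obtain ⟨k, hk⟩ := hcol.exists_col_eq S i
    have key : ∀ t, i = col (D.vertex (S, t)) ↔ t = k := fun t =>
      hk ▸ eq_comm.trans (hcol.2 S).eq_iff
    rw [D.partner_vertex hcol hk, key, key]
    split_ifs with h
    · subst h
      exact iff_of_false (D.mate_ne S _ _)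
        ((by decide : ∀ a : ZMod 5, ¬(a - 1 = a ∨ a + 2 = a)) a)
    · rw [D.vertex.injective.eq_iff, Prod.mk.injEq, pentagonPartner_eq_add_one_iff]
      simp
  rw [Set.ext hiff, Set.ofPred_or, Set.ofPred_eq_eq_singleton, Set.ofPred_eq_eq_singleton,
    Set.singleton_union, Set.ncard_pair]
  exact (hcol.2 S).ne ((by decide : ∀ a : ZMod 5, a - 1 ≠ a + 2) a)

lemma ncard_cons_partner_eq_two (hcol : D.IsColoring col) {u w : V} (huw : G.Adj u w) :
    {j | (Fin.cons D.mate (D.partner col) : Fin 6 → V → V) j u = w}.ncard = 2 := by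
  classical
  rw [ncard_setOf_fin_succ]
  simp only [Fin.cons_zero, Fin.cons_succ]
  obtain ⟨⟨S, a⟩, rfl⟩ := D.vertex.surjective u
  rcases D.eq_of_adj S a w huw with rfl | rfl | rfl
  · simp only [if_true, D.partner_eq_mate_iff, Set.ofPred_eq_eq_singleton', Set.ncard_singleton]
  · rw [if_neg (D.mate_ne S a _), D.ncard_partner_eq_succ hcol]
  · rw [if_neg (D.mate_ne S a _), ← D.ncard_partner_eq_succ hcol S (a - 1), sub_add_cancel,
      zero_add]
    congr 1
    ext i
    exact (D.partner_involutive hcol i).eq_iff.trans eq_comm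

theorem exists_isFulkersonCovering (hcol : D.IsColoring col) :
    ∃ F, IsFulkersonCovering G F :=
  ⟨_, isFulkersonCovering_of_involutive
    (Fin.cases D.mate_involutive fun i => by simpa using D.partner_involutive hcol i)
    (Fin.cases D.adj_mate fun i => by simpa using D.adj_partner i)
    fun _ _ => D.ncard_cons_partner_eq_two hcol⟩

end PentagonFactor

lemma exists_unique_adj_notMem {G : SimpleGraph V} (hcubic : IsCubic G) {S : Set V} {v : V}
    (hdeg : {u | u ∈ S ∧ G.Adj v u}.ncard = 2) : ∃! u, G.Adj v u ∧ u ∉ S := by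
  have hsub : {u | u ∈ S ∧ G.Adj v u} ⊆ G.neighborSet v := fun u hu => hu.2
  have hone : (G.neighborSet v \ {u | u ∈ S ∧ G.Adj v u}).ncard = 1 := by
    rw [Set.ncard_sdiff' hsub (Set.finite_of_ncard_ne_zero (by rw [hcubic v]; omega)), hcubic v,
      hdeg]
  obtain ⟨u, hu⟩ := Set.ncard_eq_one.1 hone
  have hmem : ∀ x, x ∈ G.neighborSet v \ {u | u ∈ S ∧ G.Adj v u} ↔ G.Adj v x ∧ x ∉ S := by
    intro x
    simp only [Set.mem_sdiff, mem_neighborSet, Set.mem_ofPred_eq]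
    tauto
  refine ⟨u, (hmem u).1 (hu ▸ rfl), fun x hx => ?_⟩
  simpa [hu] using (hmem x).2 hx

namespace IsChordlessC5TwoFactor

variable {G : SimpleGraph V} {P : Set (Set V)}

lemma eq_of_mem (hP : IsChordlessC5TwoFactor G P) {S T : Set V} {v : V} (hS : S ∈ P)
    (hT : T ∈ P) (hvS : v ∈ S) (hvT : v ∈ T) : S = T := by
  by_contra hne
  exact Set.disjoint_left.1 (hP.1 hS hT hne) hvS hvT

lemma exists_equiv (hP : IsChordlessC5TwoFactor G P) :
    ∃ e : P × ZMod 5 ≃ V, ∀ (S : P) (j : ZMod 5), e (S, j) ∈ (S : Set V) ∧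
      G.Adj (e (S, j)) (e (S, j + 1)) ∧
      ∀ w ∈ (S : Set V), G.Adj (e (S, j)) w → w = e (S, j + 1) ∨ w = e (S, j - 1) := by
  choose f hf_inj hf_range hf_adj using fun S : P =>
    exists_pentagon_of_ncard_eq_five (hP.2.2 S S.2).1 (hP.2.2 S S.2).2.1
  have hf_mem : ∀ (S : P) j, f S j ∈ (S : Set V) := fun S j => hf_range S ▸ ⟨j, rfl⟩
  have hbij : Function.Bijective fun x : P × ZMod 5 => f x.1 x.2 := by
    refine ⟨fun ⟨S, j⟩ ⟨T, k⟩ h => ?_, fun v => ?_⟩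
    · change f S j = f T k at h
      obtain rfl : S = T := Subtype.ext (hP.eq_of_mem S.2 T.2 (hf_mem S j) (h ▸ hf_mem T k))
      rw [hf_inj S h]
    · obtain ⟨S, hS, hv⟩ := Set.mem_sUnion.1 (hP.2.1 ▸ Set.mem_univ v)
      obtain ⟨j, rfl⟩ : v ∈ Set.range (f ⟨S, hS⟩) := (hf_range ⟨S, hS⟩).symm ▸ hv
      exact ⟨(⟨S, hS⟩, j), rfl⟩
  refine ⟨Equiv.ofBijective _ hbij, fun S j => ⟨hf_mem S j, hf_adj S j, fun w hw hjw => ?_⟩⟩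
  have hdeg := (hP.2.2 S S.2).2.1 _ (hf_mem S j)
  have hpred := hf_adj S (j - 1)
  rw [sub_add_cancel] at hpred
  exact eq_or_eq_of_adj_of_ncard_eq_two hdeg (hf_mem S _) (hf_mem S _) (hf_adj S j) hpred.symm
    ((hf_inj S).ne ((by decide : ∀ j : ZMod 5, j + 1 ≠ j - 1) j)) hw hjw

theorem exists_pentagonFactor (hP : IsChordlessC5TwoFactor G P) (hcubic : IsCubic G) :
    ∃ D : PentagonFactor G P,
      ∀ v, v ∈ (D.part v : Set V) ∧ s(v, D.mate v) ∈ complementaryMatching G P := by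
  obtain ⟨e, he⟩ := hP.exists_equiv
  have hmem : ∀ v, v ∈ ((e.symm v).1 : Set V) := fun v => by
    simpa using (he (e.symm v).1 (e.symm v).2).1
  have hpart : ∀ {v S}, S ∈ P → v ∈ S → ((e.symm v).1 : Set V) = S := fun hS hv =>
    hP.eq_of_mem (e.symm _).1.2 hS (hmem _) hv
  choose m hm hm_uniq using fun v =>
    exists_unique_adj_notMem hcubic ((hP.2.2 _ (e.symm v).1.2).2.1 v (hmem v))
  have hmm : Function.Involutive m := fun v => (hm_uniq (m v) v ⟨(hm v).1.symm,
    fun hv => (hm v).2 (hpart (e.symm (m v)).1.2 hv ▸ hmem (m v))⟩).symm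
  refine ⟨{ vertex := e
            mate := m
            mate_involutive := hmm
            adj_mate := fun v => (hm v).1
            adj_succ := fun S j => (he S j).2.1
            mate_ne := fun S j k h => ?_
            eq_of_adj := fun S j w hw => ?_ }, fun v => ⟨hmem v, (hm v).1, ?_⟩⟩
  · have hout := (hm (e (S, j))).2
    rw [h, Equiv.symm_apply_apply] at hout
    exact hout (he S k).1
  · by_cases hwS : w ∈ (S : Set V)
    · exact Or.inr ((he S j).2.2 w hwS hw)
    · exact Or.inl (hm_uniq _ w ⟨hw, by simpa using hwS⟩)
  · rintro ⟨S, hS, hall⟩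
    exact (hm v).2 (hpart hS (hall v (Sym2.mem_mk_left _ _)) ▸ hall _ (Sym2.mem_mk_right _ _))

end IsChordlessC5TwoFactor

theorem stmt_15_general {V : Type*} [Fintype V] (G : SimpleGraph V)
    (hcubic : IsCubic G)
    (P : Set (Set V)) (hP : IsChordlessC5TwoFactor G P)
    (P1 P2 : Set (Set V)) (hdisj : P1 ∩ P2 = ∅)
    (hbip : ∀ u v : V, s(u, v) ∈ complementaryMatching G P →
      ∀ S ∈ P, ∀ T ∈ P, u ∈ S → v ∈ T →
        ((S ∈ P1 ∧ T ∈ P2) ∨ (S ∈ P2 ∧ T ∈ P1))) :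
    ∃ F : Fin 6 → Set (Sym2 V), IsFulkersonCovering G F := by
  obtain ⟨D, hD⟩ := hP.exists_pentagonFactor hcubic
  have hP12 : ∀ S ∈ P1, S ∉ P2 := fun S h1 h2 => (hdisj ▸ ⟨h1, h2⟩ : S ∈ (∅ : Set (Set V)))
  obtain ⟨col, hcol⟩ := D.exists_isColoring (fun S => (S : Set V) ∈ P1) fun v => by
    rcases hbip v (D.mate v) (hD v).2 _ (D.part v).2 _ (D.part (D.mate v)).2 (hD v).1
      (hD (D.mate v)).1 with ⟨h1, h2⟩ | ⟨h2, h1⟩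
    · exact iff_of_false (fun h => hP12 _ h h2) (not_not.2 h1)
    · exact iff_of_true h1 (fun h => hP12 _ h h2)
  exact D.exists_isFulkersonCovering hcol

/-- Let `G` be a bridgeless cubic graph with a 2-factor all of whose
cycles are chordless 5-cycles, with complementary perfect matching `M`. If the cycles of
the 2-factor can be partitioned into two classes so that every edge of `M` joins
vertices lying on cycles in different classes (i.e. the contracted multigraph `G*` is
bipartite), then `G` admits a Fulkerson covering. -/
theorem stmt_15 {V : Type*} [Fintype V] (G : SimpleGraph V)
    (hcubic : IsCubic G) (hbridgeless : Bridgeless G)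
    (P : Set (Set V)) (hP : IsChordlessC5TwoFactor G P)
    (P1 P2 : Set (Set V)) (hunion : P1 ∪ P2 = P) (hdisj : P1 ∩ P2 = ∅)
    (hbip : ∀ u v : V, s(u, v) ∈ complementaryMatching G P →
      ∀ S ∈ P, ∀ T ∈ P, u ∈ S → v ∈ T →
        ((S ∈ P1 ∧ T ∈ P2) ∨ (S ∈ P2 ∧ T ∈ P1))) :
    ∃ F : Fin 6 → Set (Sym2 V), IsFulkersonCovering G F :=
  stmt_15_general G hcubic P hP P1 P2 hdisj hbip
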